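/- Write n = 2^j · m with m odd. Then Σ_{1 ≤ k ≤ n, gcd(k,n)=1} c_n(k² − 1) equals d_j · ψ(m) if j ∈ {0,1,2,3} and m is squarefree (with d_0 = d_1 = 1, d_2 = 4, d_3 = 16), and 0 otherwise. -/

import Mathlib

open Finset ArithmeticFunction

/-- The Ramanujan sum `c_n(k) = ∑_{d ∣ gcd(k,n)} d · μ(n/d)`, for integer `k`. -/
def ramanujanSum (n : ℕ) (k : ℤ) : ℤ :=
  ∑ d ∈ (Int.gcd k n).divisors, (d : ℤ) * moebius (n / d)

/-!
Write `ρ(d)` for the number of square roots of `1` modulo `d`. Expanding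
`c_n(k² - 1) = ∑_{d ∣ n, d ∣ k² - 1} d μ(n/d)` and exchanging the sums leaves, for each
`d ∣ n`, the number of units `k` modulo `n` with `k² ≡ 1 (mod d)`. These form the preimage of
the square roots of unity under the surjection `(ℤ/n)ˣ → (ℤ/d)ˣ`, so there are
`φ(n) ρ(d) / φ(d)` of them, and the sum becomes `φ(n) · (g * μ)(n)` with `g(d) = d ρ(d) / φ(d)`,
a multiplicative function of `n`. At prime powers it equals `p ρ(p) - (p - 1)` at `p` and
`p^a (ρ(p^a) - ρ(p^(a-1)))` for `a ≥ 2`. Since `ρ(p^a) = 2` for odd `p`, while `ρ(2) = 1`,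
`ρ(4) = 2` and `ρ(2^a) = 4` for `a ≥ 3`, its values are `p + 1` at odd primes, `0` at higher
odd prime powers, and `1, 4, 16, 0, 0, …` at `2, 4, 8, 16, 32, …`.
-/

open scoped ArithmeticFunction.Moebius

theorem card_preimage_mul_card_eq_of_surjective {G H : Type*} [Group G] [Group H] {f : G →* H}
    (hf : Function.Surjective f) (s : Set H) :
    Nat.card (f ⁻¹' s) * Nat.card H = Nat.card s * Nat.card G := by
  let e := QuotientGroup.quotientKerEquivOfSurjective f hf
  have hpre : f ⁻¹' s = QuotientGroup.mk ⁻¹' (e ⁻¹' s) := rfl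
  rw [hpre, QuotientGroup.card_preimage_mk, Nat.card_preimage_of_injective e.injective
      (by simp [e.surjective.range_eq]), f.ker.card_eq_card_quotient_mul_card_subgroup,
    Nat.card_congr e.toEquiv]
  ring

theorem Prime.pow_dvd_sq_sub_one_iff {R : Type*} [CommRing R] [IsDomain R] {p : R} (hp : Prime p)
    (hp2 : ¬p ∣ 2) (a : ℕ) (k : R) :
    p ^ a ∣ k ^ 2 - 1 ↔ p ^ a ∣ k - 1 ∨ p ^ a ∣ k + 1 := by
  have hfac : k ^ 2 - 1 = (k - 1) * (k + 1) := by ring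
  refine ⟨fun h => ?_, ?_⟩
  · rw [hfac] at h
    by_cases hk : p ∣ k - 1
    · refine .inl (hp.pow_dvd_of_dvd_mul_right a (fun hk' => hp2 ?_) h)
      simpa [show k + 1 - (k - 1) = (2 : R) by ring] using dvd_sub hk' hk
    · exact .inr (hp.pow_dvd_of_dvd_mul_left a hk h)
  · rintro (h | h) <;> rw [hfac]
    · exact h.mul_right _
    · exact h.mul_left _

theorem Int.two_pow_add_three_dvd_sq_sub_one_iff (a : ℕ) (k : ℤ) :
    2 ^ (a + 3) ∣ k ^ 2 - 1 ↔ 2 ^ (a + 2) ∣ k - 1 ∨ 2 ^ (a + 2) ∣ k + 1 := by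
  constructor
  · intro h
    obtain ⟨t, rfl⟩ : Odd k := by
      have : Even (k ^ 2 - 1) := even_iff_two_dvd.mpr ((dvd_pow_self 2 (by omega)).trans h)
      rwa [Int.even_sub_one, Int.even_pow' two_ne_zero, Int.not_even_iff_odd] at this
    have htt : 2 ^ (a + 1) ∣ t * (t + 1) := by
      rw [show (2 * t + 1) ^ 2 - 1 = 2 ^ 2 * (t * (t + 1)) by ring,
        show a + 3 = 2 + (a + 1) by ring, pow_add] at h
      exact (mul_dvd_mul_iff_left (by norm_num)).mp h
    rw [show 2 * t + 1 - 1 = 2 * t by ring, show 2 * t + 1 + 1 = 2 * (t + 1) by ring,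
      pow_succ' _ (a + 1)]
    rcases Int.even_or_odd t with ht | ht
    · have : ¬(2 : ℤ) ∣ t + 1 := by rw [← even_iff_two_dvd, Int.even_add_one]; simpa
      exact .inl (mul_dvd_mul_left 2 (Int.prime_two.pow_dvd_of_dvd_mul_right _ this htt))
    · have : ¬(2 : ℤ) ∣ t := by rw [← even_iff_two_dvd, Int.not_even_iff_odd]; exact ht
      exact .inr (mul_dvd_mul_left 2 (Int.prime_two.pow_dvd_of_dvd_mul_left _ this htt))
  · rintro (⟨s, hs⟩ | ⟨s, hs⟩)
    · exact ⟨s * (2 ^ (a + 1) * s + 1), by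
        rw [show k ^ 2 - 1 = (k - 1) * (k - 1 + 2) by ring, hs]; ring⟩
    · exact ⟨s * (2 ^ (a + 1) * s - 1), by
        rw [show k ^ 2 - 1 = (k + 1) * (k + 1 - 2) by ring, hs]; ring⟩

theorem ZMod.intCast_eq_intCast_iff_dvd_sub' {N : ℕ} (k c : ℤ) :
    (k : ZMod N) = c ↔ (N : ℤ) ∣ k - c := by
  rw [ZMod.intCast_eq_intCast_iff_dvd_sub, dvd_sub_comm]

theorem ZMod.intCast_sq_eq_one_iff {N : ℕ} (k : ℤ) :
    (k : ZMod N) ^ 2 = 1 ↔ (N : ℤ) ∣ k ^ 2 - 1 := by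
  rw [← Int.cast_pow, ← Int.cast_one, ZMod.intCast_eq_intCast_iff_dvd_sub']

theorem ZMod.intCast_eq_one_iff {N : ℕ} (k : ℤ) : (k : ZMod N) = 1 ↔ (N : ℤ) ∣ k - 1 := by
  simpa using ZMod.intCast_eq_intCast_iff_dvd_sub' (N := N) k 1

theorem ZMod.intCast_eq_neg_one_iff {N : ℕ} (k : ℤ) :
    (k : ZMod N) = -1 ↔ (N : ℤ) ∣ k + 1 := by
  simpa using ZMod.intCast_eq_intCast_iff_dvd_sub' (N := N) k (-1)

theorem ZMod.natCard_units_eq_totient (n : ℕ) [NeZero n] : Nat.card (ZMod n)ˣ = n.totient := by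
  rw [Nat.card_eq_fintype_card, ZMod.card_units_eq_totient]

theorem ZMod.units_neg_one_ne_one {N : ℕ} [Fact (2 < N)] : (-1 : (ZMod N)ˣ) ≠ 1 := fun h =>
  ZMod.neg_one_ne_one (by simpa using congrArg Units.val h)

theorem card_rootsOfUnity_two_zmod_eq_two {q : ℕ} [Fact (2 < q)]
    (h : ∀ x : ZMod q, x ^ 2 = 1 → x = 1 ∨ x = -1) :
    Nat.card (rootsOfUnity 2 (ZMod q)) = 2 := by
  have hset : (rootsOfUnity 2 (ZMod q) : Set (ZMod q)ˣ) = {1, -1} := by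
    ext u
    simp only [SetLike.mem_coe, mem_rootsOfUnity', Set.mem_insert_iff,
      Set.mem_singleton_iff, Units.ext_iff, Units.val_one, Units.val_neg]
    exact ⟨h _, by rintro (h | h) <;> simp [h]⟩
  rw [← SetLike.coe_sort_coe, hset, Nat.card_coe_set_eq,
    Set.ncard_pair ZMod.units_neg_one_ne_one.symm]

theorem card_rootsOfUnity_two_zmod_of_totient_eq_one {d : ℕ} (h : d.totient = 1) :
    Nat.card (rootsOfUnity 2 (ZMod d)) = 1 := by
  have : NeZero d := ⟨by rintro rfl; simp at h⟩
  refine Nat.dvd_one.mp ?_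
  rw [← h, ← ZMod.natCard_units_eq_totient]
  exact Subgroup.card_subgroup_dvd_card _

theorem card_rootsOfUnity_two_zmod_prime_pow {p : ℕ} (hp : p.Prime) (hp2 : p ≠ 2) (a : ℕ) :
    Nat.card (rootsOfUnity 2 (ZMod (p ^ (a + 1)))) = 2 := by
  have : Fact (2 < p ^ (a + 1)) :=
    ⟨(hp.two_le.lt_of_ne' hp2).trans_le (Nat.le_self_pow (by omega) p)⟩
  have hp2' : ¬(p : ℤ) ∣ 2 := by
    exact_mod_cast fun h => hp2 ((Nat.prime_dvd_prime_iff_eq hp Nat.prime_two).mp h)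
  refine card_rootsOfUnity_two_zmod_eq_two fun x hx => ?_
  obtain ⟨k, rfl⟩ := ZMod.intCast_surjective x
  rw [ZMod.intCast_sq_eq_one_iff, Nat.cast_pow,
    (Nat.prime_iff_prime_int.mp hp).pow_dvd_sq_sub_one_iff hp2'] at hx
  simpa [ZMod.intCast_eq_one_iff, ZMod.intCast_eq_neg_one_iff] using hx

theorem card_rootsOfUnity_two_zmod_four : Nat.card (rootsOfUnity 2 (ZMod 4)) = 2 :=
  have : Fact (2 < 4) := ⟨by norm_num⟩
  card_rootsOfUnity_two_zmod_eq_two (by decide)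

theorem card_rootsOfUnity_two_zmod_two_pow (a : ℕ) :
    Nat.card (rootsOfUnity 2 (ZMod (2 ^ (a + 3)))) = 4 := by
  have hd : 2 ^ (a + 2) ∣ 2 ^ (a + 3) := pow_dvd_pow 2 (by omega)
  have : Fact (2 < 2 ^ (a + 2)) :=
    ⟨lt_of_lt_of_le (by norm_num) (Nat.pow_le_pow_right two_pos (by omega : 2 ≤ a + 2))⟩
  have hpre : (rootsOfUnity 2 (ZMod (2 ^ (a + 3))) : Set _) = ZMod.unitsMap hd ⁻¹' {1, -1} := by
    ext u
    obtain ⟨k, hk⟩ := ZMod.intCast_surjective (u : ZMod (2 ^ (a + 3)))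
    simp only [SetLike.mem_coe, mem_rootsOfUnity', Set.mem_preimage,
      Set.mem_insert_iff, Set.mem_singleton_iff, Units.ext_iff, ZMod.unitsMap_val, ← hk,
      ZMod.cast_intCast hd, Units.val_one, Units.val_neg, ZMod.intCast_sq_eq_one_iff,
      ZMod.intCast_eq_one_iff, ZMod.intCast_eq_neg_one_iff, Nat.cast_pow, Nat.cast_ofNat]
    exact Int.two_pow_add_three_dvd_sq_sub_one_iff a k
  have key := card_preimage_mul_card_eq_of_surjective (ZMod.unitsMap_surjective hd) {1, -1}
  rw [← hpre, SetLike.coe_sort_coe, Nat.card_coe_set_eq,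
    Set.ncard_pair ZMod.units_neg_one_ne_one.symm, ZMod.natCard_units_eq_totient,
    ZMod.natCard_units_eq_totient,
    Nat.totient_prime_pow_succ Nat.prime_two, Nat.totient_prime_pow_succ Nat.prime_two] at key
  rw [pow_succ 2 (a + 1)] at key
  have : 0 < 2 ^ (a + 1) := by positivity
  nlinarith

theorem card_rootsOfUnity_prod (k : ℕ) (M N : Type*) [CommMonoid M] [CommMonoid N] :
    Nat.card (rootsOfUnity k (M × N)) =
      Nat.card (rootsOfUnity k M) * Nat.card (rootsOfUnity k N) := by
  rw [← Nat.card_prod]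
  refine Nat.card_congr ((MulEquiv.prodUnits.toEquiv.subtypeEquiv fun u => ?_).trans
    (Equiv.subtypeProdEquivProd (p := (· ∈ rootsOfUnity k M)) (q := (· ∈ rootsOfUnity k N))))
  rw [mem_rootsOfUnity, ← MulEquiv.map_eq_one_iff MulEquiv.prodUnits, map_pow, Prod.ext_iff]
  rfl

theorem card_rootsOfUnity_zmod_mul (k : ℕ) {a b : ℕ} (h : a.Coprime b) :
    Nat.card (rootsOfUnity k (ZMod (a * b))) =
      Nat.card (rootsOfUnity k (ZMod a)) * Nat.card (rootsOfUnity k (ZMod b)) := by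
  rw [← card_rootsOfUnity_prod,
    Nat.card_congr ((ZMod.chineseRemainder h).toMulEquiv.restrictRootsOfUnity k).toEquiv]

theorem ramanujanSum_eq_sum_divisors {n : ℕ} (hn : n ≠ 0) (x : ℤ) :
    ramanujanSum n x = ∑ d ∈ n.divisors, if (d : ℤ) ∣ x then (d : ℤ) * μ (n / d) else 0 := by
  rw [ramanujanSum, ← Finset.sum_filter]
  congr 1
  ext d
  simp [Nat.mem_divisors, Int.gcd, Nat.dvd_gcd_iff, Int.natCast_dvd, hn]
  tauto

theorem card_filter_Icc_coprime (n : ℕ) [NeZero n] (P : ZMod n → Prop) [DecidablePred P] :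
    #{k ∈ Icc 1 n | Nat.Coprime k n ∧ P (k : ZMod n)} = Nat.card {u : (ZMod n)ˣ // P u} := by
  -- `(x - 1).val + 1` is the representative of `x` in `[1, n]`
  have hcast (x : ZMod n) : (((x - 1).val + 1 : ℕ) : ZMod n) = x := by
    rw [Nat.cast_succ, ZMod.natCast_zmod_val, sub_add_cancel]
  rw [Nat.card_eq_fintype_card, Fintype.card_subtype]
  refine card_bij' (fun k hk => ZMod.unitOfCoprime k (mem_filter.mp hk).2.1)
    (fun u _ => ((u : ZMod n) - 1).val + 1) ?_ ?_ ?_ ?_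
  · intro k hk
    simpa [ZMod.coe_unitOfCoprime] using (mem_filter.mp hk).2.2
  · intro u hu
    have hval := ZMod.val_lt ((u : ZMod n) - 1)
    refine mem_filter.mpr ⟨mem_Icc.mpr ⟨by omega, by omega⟩, ?_, by simpa [hcast] using hu⟩
    exact (ZMod.isUnit_iff_coprime _ n).mp (by rw [hcast]; exact u.isUnit)
  · intro k hk
    obtain ⟨hk1, hkn⟩ := mem_Icc.mp (mem_filter.mp hk).1
    rw [ZMod.coe_unitOfCoprime, ← Nat.cast_pred hk1, ZMod.val_cast_of_lt (by omega)]
    omega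
  · intro u _
    ext
    rw [ZMod.coe_unitOfCoprime, hcast]

theorem card_filter_Icc_coprime_sq_eq_one_mul_totient {n d : ℕ} [NeZero n] (hd : d ∣ n) :
    #{k ∈ Icc 1 n | Nat.Coprime k n ∧ (d : ℤ) ∣ (k : ℤ) ^ 2 - 1} * d.totient =
      Nat.card (rootsOfUnity 2 (ZMod d)) * n.totient := by
  have : NeZero d := ⟨fun h => NeZero.ne n (Nat.eq_zero_of_zero_dvd (h ▸ hd))⟩
  let π := ZMod.castHom hd (ZMod d)
  have hcount : #{k ∈ Icc 1 n | Nat.Coprime k n ∧ (d : ℤ) ∣ (k : ℤ) ^ 2 - 1} =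
      Nat.card (ZMod.unitsMap hd ⁻¹' rootsOfUnity 2 (ZMod d)) := calc
    _ = #{k ∈ Icc 1 n | Nat.Coprime k n ∧ π (k : ZMod n) ^ 2 = 1} := by
      congr! 3 with k
      rw [map_natCast, iff_comm]
      exact_mod_cast ZMod.intCast_sq_eq_one_iff (N := d) (k : ℤ)
    _ = Nat.card {u : (ZMod n)ˣ // π u ^ 2 = 1} :=
      card_filter_Icc_coprime n (fun x => π x ^ 2 = 1)
    _ = _ := Nat.card_congr <| Equiv.subtypeEquivRight fun u => by
      rw [Set.mem_preimage, SetLike.mem_coe, mem_rootsOfUnity', ZMod.unitsMap_val]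
      rfl
  rw [hcount, ← ZMod.natCard_units_eq_totient, ← ZMod.natCard_units_eq_totient]
  exact card_preimage_mul_card_eq_of_surjective (ZMod.unitsMap_surjective hd) _

theorem ArithmeticFunction.mul_moebius_apply_prime_pow_succ {R : Type*} [CommRing R]
    (f : ArithmeticFunction R) {p : ℕ} (hp : p.Prime) (a : ℕ) :
    (f * μ) (p ^ (a + 1)) = f (p ^ (a + 1)) - f (p ^ a) := by
  rw [mul_comm, mul_apply,
    Nat.sum_divisorsAntidiagonal (fun x y => (μ : ArithmeticFunction R) x * f y),
    Nat.sum_divisors_prime_pow hp, sum_range_succ', sum_range_succ']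
  have hdiv : p ^ (a + 1) / p = p ^ a := by rw [pow_succ, Nat.mul_div_cancel _ hp.pos]
  simp [intCoe_apply, moebius_apply_prime_pow hp, moebius_apply_prime hp, hdiv, sub_eq_add_neg,
    add_comm]

noncomputable def sqrtOneWeight : ArithmeticFunction ℚ :=
  ⟨fun d => Nat.card (rootsOfUnity 2 (ZMod d)) * d / d.totient, by simp⟩

theorem sqrtOneWeight_apply (d : ℕ) :
    sqrtOneWeight d = Nat.card (rootsOfUnity 2 (ZMod d)) * d / d.totient := rfl

theorem isMultiplicative_sqrtOneWeight : sqrtOneWeight.IsMultiplicative := by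
  refine ⟨by simp [sqrtOneWeight_apply], fun h => ?_⟩
  simp only [sqrtOneWeight_apply, card_rootsOfUnity_zmod_mul 2 h, Nat.totient_mul h]
  push_cast
  ring

noncomputable def ramanujanQuadratic : ArithmeticFunction ℚ :=
  ⟨fun n => n.totient * (sqrtOneWeight * μ) n, by simp⟩

theorem ramanujanQuadratic_apply (n : ℕ) :
    ramanujanQuadratic n = n.totient * (sqrtOneWeight * μ) n := rfl

theorem isMultiplicative_ramanujanQuadratic : ramanujanQuadratic.IsMultiplicative := by
  have hmul := isMultiplicative_sqrtOneWeight.mul isMultiplicative_moebius.intCast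
  refine ⟨by simp [ramanujanQuadratic_apply, hmul.map_one], fun h => ?_⟩
  simp only [ramanujanQuadratic_apply, Nat.totient_mul h, hmul.map_mul_of_coprime h]
  push_cast
  ring

theorem sum_ramanujanSum_sq_sub_one (n : ℕ) [NeZero n] :
    ∑ k ∈ (Icc 1 n).filter (fun k => Nat.gcd k n = 1),
      (ramanujanSum n ((k : ℤ) ^ 2 - 1) : ℚ) = ramanujanQuadratic n := by
  calc _ = ∑ d ∈ n.divisors, (#{k ∈ Icc 1 n | Nat.Coprime k n ∧ (d : ℤ) ∣ (k : ℤ) ^ 2 - 1} : ℚ) *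
          (d * μ (n / d)) := by
        simp_rw [ramanujanSum_eq_sum_divisors (NeZero.ne n)]
        push_cast
        rw [sum_comm]
        refine sum_congr rfl fun d _ => ?_
        rw [← sum_filter, filter_filter, sum_const, nsmul_eq_mul]
    _ = ∑ d ∈ n.divisors, n.totient * (sqrtOneWeight d * μ (n / d)) := by
        refine sum_congr rfl fun d hd => ?_
        have hdn := Nat.dvd_of_mem_divisors hd
        have htot : (d.totient : ℚ) ≠ 0 := by
          exact_mod_cast (Nat.totient_pos.mpr (Nat.pos_of_dvd_of_pos hdn (NeZero.pos n))).ne'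
        have hcount := congrArg (Nat.cast (R := ℚ))
          (card_filter_Icc_coprime_sq_eq_one_mul_totient hdn)
        push_cast at hcount
        rw [← eq_div_iff htot] at hcount
        rw [hcount, sqrtOneWeight_apply]
        ring
    _ = ramanujanQuadratic n := by
        rw [ramanujanQuadratic_apply, mul_apply,
          Nat.sum_divisorsAntidiagonal
            (fun x y => sqrtOneWeight x * (μ : ArithmeticFunction ℚ) y),
          mul_sum]
        simp [intCoe_apply]

theorem ramanujanQuadratic_apply_prime {p : ℕ} (hp : p.Prime) :
    ramanujanQuadratic p = p * Nat.card (rootsOfUnity 2 (ZMod p)) - (p - 1) := by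
  have h := sqrtOneWeight.mul_moebius_apply_prime_pow_succ hp 0
  rw [zero_add, pow_one, pow_zero, isMultiplicative_sqrtOneWeight.map_one] at h
  have hp1 : (p : ℚ) - 1 ≠ 0 := sub_ne_zero.mpr (by exact_mod_cast hp.one_lt.ne')
  rw [ramanujanQuadratic_apply, h, sqrtOneWeight_apply, Nat.totient_prime hp]
  push_cast [hp.one_le]
  field_simp

theorem ramanujanQuadratic_apply_prime_pow_add_two {p : ℕ} (hp : p.Prime) (a : ℕ) :
    ramanujanQuadratic (p ^ (a + 2)) = p ^ (a + 2) *
      (Nat.card (rootsOfUnity 2 (ZMod (p ^ (a + 2)))) -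
        Nat.card (rootsOfUnity 2 (ZMod (p ^ (a + 1)))) : ℚ) := by
  have hp0 : (p : ℚ) ≠ 0 := by exact_mod_cast hp.ne_zero
  have hp1 : (p : ℚ) - 1 ≠ 0 := sub_ne_zero.mpr (by exact_mod_cast hp.one_lt.ne')
  rw [ramanujanQuadratic_apply, sqrtOneWeight.mul_moebius_apply_prime_pow_succ hp (a + 1),
    sqrtOneWeight_apply, sqrtOneWeight_apply, Nat.totient_prime_pow_succ hp,
    Nat.totient_prime_pow_succ hp]
  push_cast [hp.one_le]
  field_simp
  ring

theorem ramanujanQuadratic_apply_odd_prime {p : ℕ} (hp : p.Prime) (hp2 : p ≠ 2) :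
    ramanujanQuadratic p = p + 1 := by
  have hρ := card_rootsOfUnity_two_zmod_prime_pow hp hp2 0
  rw [zero_add, pow_one] at hρ
  rw [ramanujanQuadratic_apply_prime hp, hρ]
  push_cast
  ring

theorem ramanujanQuadratic_apply_odd_prime_pow_add_two {p : ℕ} (hp : p.Prime) (hp2 : p ≠ 2)
    (a : ℕ) : ramanujanQuadratic (p ^ (a + 2)) = 0 := by
  rw [ramanujanQuadratic_apply_prime_pow_add_two hp, card_rootsOfUnity_two_zmod_prime_pow hp hp2,
    card_rootsOfUnity_two_zmod_prime_pow hp hp2, sub_self, mul_zero]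

theorem ramanujanQuadratic_two_pow (j : ℕ) :
    ramanujanQuadratic (2 ^ j) =
      if j ≤ 3 then (if j ≤ 1 then 1 else if j = 2 then 4 else 16) else 0 := by
  have hρ2 : Nat.card (rootsOfUnity 2 (ZMod (2 ^ (0 + 1)))) = 1 :=
    card_rootsOfUnity_two_zmod_of_totient_eq_one rfl
  have hρ4 : Nat.card (rootsOfUnity 2 (ZMod (2 ^ (0 + 2)))) = 2 := card_rootsOfUnity_two_zmod_four
  have hρ8 : Nat.card (rootsOfUnity 2 (ZMod (2 ^ (1 + 2)))) = 4 :=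
    card_rootsOfUnity_two_zmod_two_pow 0
  match j with
  | 0 => simp [isMultiplicative_ramanujanQuadratic.map_one]
  | 1 =>
    rw [pow_one, ramanujanQuadratic_apply_prime Nat.prime_two,
      card_rootsOfUnity_two_zmod_of_totient_eq_one rfl]
    norm_num
  | 2 =>
    rw [ramanujanQuadratic_apply_prime_pow_add_two Nat.prime_two 0, hρ4, hρ2]
    norm_num
  | 3 =>
    rw [ramanujanQuadratic_apply_prime_pow_add_two Nat.prime_two 1, hρ8, hρ4]
    norm_num
  | a + 4 =>
    rw [ramanujanQuadratic_apply_prime_pow_add_two Nat.prime_two (a + 2),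
      card_rootsOfUnity_two_zmod_two_pow (a + 1), card_rootsOfUnity_two_zmod_two_pow a]
    simp

theorem ramanujanQuadratic_of_odd {m : ℕ} (hm : Odd m) :
    ramanujanQuadratic m =
      if Squarefree m then ∏ p ∈ m.primeFactors, ((p : ℚ) + 1) else 0 := by
  have hodd {p : ℕ} (hp : p ∈ m.primeFactors) : p ≠ 2 := by
    rintro rfl
    exact hm.not_two_dvd_nat (Nat.dvd_of_mem_primeFactors hp)
  split_ifs with hsq
  · conv_lhs => rw [← Nat.prod_primeFactors_of_squarefree hsq]
    rw [isMultiplicative_ramanujanQuadratic.map_prod_of_prime _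
      fun p hp => Nat.prime_of_mem_primeFactors hp]
    exact prod_congr rfl fun p hp =>
      ramanujanQuadratic_apply_odd_prime (Nat.prime_of_mem_primeFactors hp) (hodd hp)
  · obtain ⟨p, hp, hpm⟩ : ∃ p, p.Prime ∧ p * p ∣ m := by
      simpa [Nat.squarefree_iff_prime_squarefree] using hsq
    have hm0 : m ≠ 0 := hm.pos.ne'
    have hpf : p ∈ m.primeFactors :=
      Nat.mem_primeFactors.mpr ⟨hp, (dvd_mul_right p p).trans hpm, hm0⟩
    obtain ⟨a, ha⟩ : ∃ a, m.factorization p = a + 2 :=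
      Nat.exists_eq_add_of_le' ((hp.pow_dvd_iff_le_factorization hm0).mp (by rwa [sq]))
    rw [isMultiplicative_ramanujanQuadratic.multiplicative_factorization _ hm0, Finsupp.prod,
      Nat.support_factorization]
    exact prod_eq_zero hpf
      (by rw [ha, ramanujanQuadratic_apply_odd_prime_pow_add_two hp (hodd hpf)])

theorem mul_prod_one_add_inv_eq_prod_add_one {m : ℕ} (hsq : Squarefree m) :
    (m : ℚ) * ∏ p ∈ m.primeFactors, (1 + 1 / (p : ℚ)) =
      ∏ p ∈ m.primeFactors, ((p : ℚ) + 1) := by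
  have hm : (m : ℚ) = ∏ p ∈ m.primeFactors, (p : ℚ) := by
    rw [← Nat.cast_prod, Nat.prod_primeFactors_of_squarefree hsq]
  rw [hm, ← prod_mul_distrib]
  refine prod_congr rfl fun p hp => ?_
  have : (p : ℚ) ≠ 0 := by exact_mod_cast (Nat.prime_of_mem_primeFactors hp).ne_zero
  field_simp

theorem eval_R_quadratic_general (n : ℕ) (j m : ℕ) (hm : Odd m)
    (hnjm : n = 2 ^ j * m) :
    ∑ k ∈ (Icc 1 n).filter (fun k => Nat.gcd k n = 1),
      (ramanujanSum n ((k : ℤ) ^ 2 - 1) : ℚ) =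
    if j ≤ 3 ∧ Squarefree m then
      (if j ≤ 1 then 1 else if j = 2 then 4 else 16) *
        ((m : ℚ) * ∏ p ∈ m.primeFactors, (1 + 1 / (p : ℚ)))
    else 0 := by
  subst hnjm
  have : NeZero (2 ^ j * m) := ⟨mul_ne_zero (by positivity) hm.pos.ne'⟩
  have hcop : Nat.Coprime (2 ^ j) m := (Nat.coprime_two_left.mpr hm).pow_left j
  rw [sum_ramanujanSum_sq_sub_one, isMultiplicative_ramanujanQuadratic.map_mul_of_coprime hcop,
    ramanujanQuadratic_two_pow, ramanujanQuadratic_of_odd hm]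
  by_cases hsq : Squarefree m
  · rw [mul_prod_one_add_inv_eq_prod_add_one hsq]
    split_ifs <;> simp_all
  · simp [hsq]

theorem eval_R_quadratic (n : ℕ) (hn : 0 < n) (j m : ℕ) (hm : Odd m)
    (hnjm : n = 2 ^ j * m) :
    ∑ k ∈ (Icc 1 n).filter (fun k => Nat.gcd k n = 1),
      (ramanujanSum n ((k : ℤ) ^ 2 - 1) : ℚ) =
    if j ≤ 3 ∧ Squarefree m then
      (if j ≤ 1 then 1 else if j = 2 then 4 else 16) *
        ((m : ℚ) * ∏ p ∈ m.primeFactors, (1 + 1 / (p : ℚ)))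
    else 0 :=
  eval_R_quadratic_general n j m hm hnjm
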